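/- Fix k ≥ 1 and coefficients c^{m,ℓ}_{q,κ} ∈ ℝ indexed by multi-indices (m,ℓ), (q,κ) with c^{m,ℓ}_{q,κ} = 0 unless |m| + 2ℓ ≤ |q| + 2κ ≤ k-1. Then given arbitrary values d_{q,κ} for 0 ≤ |q| + 2κ ≤ k-1, and arbitrary values a_{m,ℓ} for all multi-indices (m,ℓ) with 0 ≤ |m| + 2ℓ ≤ k and m_n = 0, there exists a unique choice of the remaining coefficients a_{m,ℓ} (those with m_n ≥ 1, 0 ≤ |m| + 2ℓ ≤ k) solving, for all (q,κ) with 0 ≤ |q| + 2κ ≤ k-1, the linear system (q_n+1)(q_n+2) a_{q+ē_n,κ} + Σ_{i≠n} (q_i+1)(q_i+2) a_{q+2ē_i-ē_n,κ} - (κ+1) a_{q-ē_n,κ+1} + Σ_{(m,ℓ)} c^{m,ℓ}_{q,κ} a_{m,ℓ} = d_{q,κ}. -/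
import Mathlib

open Finset

/-- The parabolic order `|m| + 2ℓ` of a multi-index `(m, ℓ)`. -/
def pOrder {n : ℕ} (p : (Fin (n + 1) → ℕ) × ℕ) : ℕ :=
  (∑ i, p.1 i) + 2 * p.2

namespace CoeffSysAux

variable {n : ℕ}

/-- termination measure -/
def mu (k : ℕ) (p : (Fin (n + 1) → ℕ) × ℕ) : ℕ :=
  (k + 1) * pOrder p + p.1 (Fin.last n)

/-- finite set containing all indices of parabolic order `≤ j` -/
def box (n j : ℕ) : Finset ((Fin (n + 1) → ℕ) × ℕ) :=
  ((Fintype.piFinset fun _ : Fin (n + 1) => Finset.range (j + 1)) ×ˢ Finset.range (j + 1)).filter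
    fun r => pOrder r ≤ j

lemma single_le_sum' (f : Fin (n + 1) → ℕ) (i : Fin (n + 1)) : f i ≤ ∑ j, f j :=
  Finset.single_le_sum (fun _ _ => Nat.zero_le _) (Finset.mem_univ i)

lemma mem_box {j : ℕ} {r : (Fin (n + 1) → ℕ) × ℕ} : r ∈ box n j ↔ pOrder r ≤ j := by
  constructor
  · intro h
    exact (Finset.mem_filter.mp h).2
  · intro h
    refine Finset.mem_filter.mpr ⟨Finset.mem_product.mpr ⟨?_, ?_⟩, h⟩
    · refine Fintype.mem_piFinset.mpr fun i => Finset.mem_range.mpr ?_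
      have := single_le_sum' r.1 i
      unfold pOrder at h
      omega
    · refine Finset.mem_range.mpr ?_
      unfold pOrder at h
      omega

lemma sum_add_ite (f : Fin (n + 1) → ℕ) (i : Fin (n + 1)) (m : ℕ) :
    ∑ j, (f j + if j = i then m else 0) = (∑ j, f j) + m := by
  rw [Finset.sum_add_distrib, Finset.sum_ite_eq' Finset.univ i (fun _ => m)]
  simp

lemma sum_sub_ite (f : Fin (n + 1) → ℕ) (i : Fin (n + 1)) (m : ℕ) (h : m ≤ f i) :
    (∑ j, (f j - if j = i then m else 0)) + m = ∑ j, f j := by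
  rw [← sum_add_ite (fun j => f j - if j = i then m else 0) i m]
  refine Finset.sum_congr rfl fun j _ => ?_
  by_cases hj : j = i
  · simp only [hj, if_pos]; omega
  · simp [hj]

lemma mu_lt₁ (k : ℕ) (p : (Fin (n + 1) → ℕ) × ℕ) (i : Fin (n + 1)) (hi : i ≠ Fin.last n)
    (h : ¬p.1 (Fin.last n) - 1 = 0) :
    mu k (fun j => ((p.1 j - if j = Fin.last n then 1 else 0) + if j = i then 2 else 0)
        - if j = Fin.last n then 1 else 0, p.2) < mu k p := by
  have hf2 : 2 ≤ p.1 (Fin.last n) := by omega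
  have h3 : (∑ j, (p.1 j - if j = Fin.last n then 1 else 0)) + 1 = ∑ j, p.1 j :=
    sum_sub_ite p.1 (Fin.last n) 1 (by omega)
  have h2 : ∑ j, ((p.1 j - if j = Fin.last n then 1 else 0) + if j = i then 2 else 0)
      = (∑ j, (p.1 j - if j = Fin.last n then 1 else 0)) + 2 :=
    sum_add_ite _ i 2
  have h1 : (∑ j, (((p.1 j - if j = Fin.last n then 1 else 0) + if j = i then 2 else 0)
      - if j = Fin.last n then 1 else 0)) + 1
      = ∑ j, ((p.1 j - if j = Fin.last n then 1 else 0) + if j = i then 2 else 0) := by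
    refine sum_sub_ite _ (Fin.last n) 1 ?_
    simp [Ne.symm hi]
    omega
  have hpo : pOrder (⟨fun j => ((p.1 j - if j = Fin.last n then 1 else 0)
      + if j = i then 2 else 0) - if j = Fin.last n then 1 else 0, p.2⟩
      : (Fin (n + 1) → ℕ) × ℕ) = pOrder p := by
    unfold pOrder; simp only; omega
  simp only [mu, hpo]
  refine Nat.add_lt_add_left ?_ _
  simp [Ne.symm hi]
  omega

lemma mu_lt₂ (k : ℕ) (p : (Fin (n + 1) → ℕ) × ℕ)
    (h : ¬p.1 (Fin.last n) - 1 = 0) :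
    mu k (fun j => (p.1 j - if j = Fin.last n then 1 else 0)
        - if j = Fin.last n then 1 else 0, p.2 + 1) < mu k p := by
  have hf2 : 2 ≤ p.1 (Fin.last n) := by omega
  have h3 : (∑ j, (p.1 j - if j = Fin.last n then 1 else 0)) + 1 = ∑ j, p.1 j :=
    sum_sub_ite p.1 (Fin.last n) 1 (by omega)
  have h1 : (∑ j, ((p.1 j - if j = Fin.last n then 1 else 0)
      - if j = Fin.last n then 1 else 0)) + 1
      = ∑ j, (p.1 j - if j = Fin.last n then 1 else 0) := by
    refine sum_sub_ite _ (Fin.last n) 1 ?_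
    simp
    omega
  have hpo : pOrder (⟨fun j => (p.1 j - if j = Fin.last n then 1 else 0)
      - if j = Fin.last n then 1 else 0, p.2 + 1⟩ : (Fin (n + 1) → ℕ) × ℕ) = pOrder p := by
    unfold pOrder; simp only; omega
  simp only [mu, hpo]
  refine Nat.add_lt_add_left ?_ _
  simp
  omega

lemma mu_lt₃ (k : ℕ) (p ml : (Fin (n + 1) → ℕ) × ℕ) (hp : pOrder p ≤ k)
    (h0 : ¬p.1 (Fin.last n) = 0) (hml : pOrder ml ≤ pOrder p - 1) :
    mu k ml < mu k p := by
  have hp1 : 1 ≤ pOrder p := by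
    have := single_le_sum' p.1 (Fin.last n)
    unfold pOrder; omega
  have hl : ml.1 (Fin.last n) ≤ pOrder ml := by
    have := single_le_sum' ml.1 (Fin.last n)
    unfold pOrder at *; omega
  have hstep : pOrder ml + 1 ≤ pOrder p := by omega
  calc mu k ml = (k + 1) * pOrder ml + ml.1 (Fin.last n) := rfl
    _ < (k + 1) * pOrder ml + (k + 1) := by
        refine Nat.add_lt_add_left ?_ _
        omega
    _ = (k + 1) * (pOrder ml + 1) := by ring
    _ ≤ (k + 1) * pOrder p := Nat.mul_le_mul_left _ hstep
    _ ≤ mu k p := Nat.le_add_right _ _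

end CoeffSysAux

open CoeffSysAux

section Main

variable {n : ℕ} (k : ℕ)
  (c : ((Fin (n + 1) → ℕ) × ℕ) → ((Fin (n + 1) → ℕ) × ℕ) → ℝ)
  (d : ((Fin (n + 1) → ℕ) × ℕ) → ℝ)
  (a₀ : ((Fin (n + 1) → ℕ) × ℕ) → ℝ)

/-- the solution, defined by recursion on the measure `mu` -/
noncomputable def aFun (p : (Fin (n + 1) → ℕ) × ℕ) : ℝ :=
  if hp : pOrder p ≤ k then
    if h0 : p.1 (Fin.last n) = 0 then a₀ p
    else
      (d (fun j => p.1 j - (if j = Fin.last n then 1 else 0), p.2)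
        - (∑ i ∈ (Finset.univ.erase (Fin.last n)).attach,
            ((((p.1 i.1 - (if i.1 = Fin.last n then 1 else 0)) + 1) *
              ((p.1 i.1 - (if i.1 = Fin.last n then 1 else 0)) + 2) : ℕ) : ℝ) *
              (if h : (p.1 (Fin.last n) - 1) = 0 then 0 else
                aFun (fun j => (p.1 j - (if j = Fin.last n then 1 else 0))
                    + (if j = i.1 then 2 else 0) - (if j = Fin.last n then 1 else 0), p.2)))
        + ((p.2 : ℝ) + 1) * (if h : (p.1 (Fin.last n) - 1) = 0 then 0 else
            aFun (fun j => (p.1 j - (if j = Fin.last n then 1 else 0))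
                - (if j = Fin.last n then 1 else 0), p.2 + 1))
        - ∑ ml ∈ (box n (pOrder p - 1)).attach,
            c ml.1 (fun j => p.1 j - (if j = Fin.last n then 1 else 0), p.2) * aFun ml.1)
      / ((((p.1 (Fin.last n) - 1) + 1) * ((p.1 (Fin.last n) - 1) + 2) : ℕ) : ℝ)
  else 0
termination_by mu k p
decreasing_by
  · exact mu_lt₁ k p i.1 (Finset.mem_erase.mp i.prop).1 h
  · exact mu_lt₂ k p h
  · exact mu_lt₃ k p ml.1 hp h0 (mem_box.mp ml.prop)


lemma pOrder_pair_succ (q : Fin (n + 1) → ℕ) (κ : ℕ) :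
    pOrder ((fun j => q j + (if j = Fin.last n then 1 else 0), κ) : (Fin (n + 1) → ℕ) × ℕ)
      = ((∑ i, q i) + 2 * κ) + 1 := by
  unfold pOrder
  simp only
  rw [sum_add_ite]
  ring

lemma aFun_succ (hk : 1 ≤ k) (q : Fin (n + 1) → ℕ) (κ : ℕ)
    (hqκ : (∑ i, q i) + 2 * κ ≤ k - 1) :
    aFun k c d a₀ (fun j => q j + (if j = Fin.last n then 1 else 0), κ)
      = (d (q, κ)
        - (∑ i ∈ Finset.univ.erase (Fin.last n),
            (((q i + 1) * (q i + 2) : ℕ) : ℝ) *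
              (if q (Fin.last n) = 0 then 0 else
                aFun k c d a₀ (fun j => q j + (if j = i then 2 else 0)
                    - (if j = Fin.last n then 1 else 0), κ)))
        + ((κ : ℝ) + 1) * (if q (Fin.last n) = 0 then 0 else
            aFun k c d a₀ (fun j => q j - (if j = Fin.last n then 1 else 0), κ + 1))
        - ∑ ml ∈ box n ((∑ i, q i) + 2 * κ), c ml (q, κ) * aFun k c d a₀ ml)
      / (((q (Fin.last n) + 1) * (q (Fin.last n) + 2) : ℕ) : ℝ) := by
  have hp : pOrder ((fun j => q j + (if j = Fin.last n then 1 else 0), κ)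
      : (Fin (n + 1) → ℕ) × ℕ) ≤ k := by
    rw [pOrder_pair_succ]; omega
  rw [aFun]
  split
  · split
    · rename_i h0
      simp at h0
    · have heta : (fun j => q j) = q := rfl
      simp only [Nat.add_sub_cancel, dite_eq_ite, if_true, heta, Finset.sum_attach]
      rw [pOrder_pair_succ, Nat.add_sub_cancel]
      conv_rhs => rw [← Finset.sum_attach (Finset.univ.erase (Fin.last n)),
        ← Finset.sum_attach (box n ((∑ i, q i) + 2 * κ))]
  · rename_i hcon
    exact absurd hp hcon


lemma aFun_of_not_le (p : (Fin (n + 1) → ℕ) × ℕ) (hp : ¬pOrder p ≤ k) :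
    aFun k c d a₀ p = 0 := by
  rw [aFun, dif_neg hp]

lemma aFun_of_last_eq_zero (p : (Fin (n + 1) → ℕ) × ℕ) (hp : pOrder p ≤ k)
    (h0 : p.1 (Fin.last n) = 0) : aFun k c d a₀ p = a₀ p := by
  rw [aFun, dif_pos hp, dif_pos h0]

lemma finsum_eq_box (hc : ∀ ml qκ, c ml qκ ≠ 0 → pOrder ml ≤ pOrder qκ ∧ pOrder qκ ≤ k - 1)
    (a : ((Fin (n + 1) → ℕ) × ℕ) → ℝ) (q : Fin (n + 1) → ℕ) (κ : ℕ) :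
    ∑ᶠ ml, c ml (q, κ) * a ml
      = ∑ ml ∈ box n ((∑ i, q i) + 2 * κ), c ml (q, κ) * a ml := by
  refine finsum_eq_sum_of_support_subset _ fun x hx => ?_
  have hcx : c x (q, κ) ≠ 0 := fun h => by
    simp only [Function.mem_support, h, zero_mul, ne_eq, not_true_eq_false] at hx
  exact Finset.mem_coe.mpr (mem_box.mpr ((hc x (q, κ) hcx).1))

end Main

/-- Solvability and uniqueness of the triangular linear system determining the coefficients of
an approximating parabolic polynomial: given coefficients `c^{m,ℓ}_{q,κ}` vanishing unless
`|m| + 2ℓ ≤ |q| + 2κ ≤ k-1`, data `d_{q,κ}`, and arbitrarily prescribed values `a₀` for the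
coefficients with `m_n = 0`, there is a unique family `a_{m,ℓ}` (with `0 ≤ |m| + 2ℓ ≤ k`,
extended by `0` outside) solving the system. Terms whose multi-index would have a negative
entry are interpreted as zero. The distinguished `n`-th coordinate is `Fin.last n`. -/
theorem coefficient_system_existence_uniqueness {n : ℕ} (k : ℕ) (hk : 1 ≤ k)
    (c : ((Fin (n + 1) → ℕ) × ℕ) → ((Fin (n + 1) → ℕ) × ℕ) → ℝ)
    (hc : ∀ ml qκ, c ml qκ ≠ 0 → pOrder ml ≤ pOrder qκ ∧ pOrder qκ ≤ k - 1)
    (d : ((Fin (n + 1) → ℕ) × ℕ) → ℝ)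
    (a₀ : ((Fin (n + 1) → ℕ) × ℕ) → ℝ) :
    ∃! a : ((Fin (n + 1) → ℕ) × ℕ) → ℝ,
      (∀ p, pOrder p ≤ k → p.1 (Fin.last n) = 0 → a p = a₀ p) ∧
      (∀ p, ¬(pOrder p ≤ k) → a p = 0) ∧
      (∀ (q : Fin (n + 1) → ℕ) (κ : ℕ), (∑ i, q i) + 2 * κ ≤ k - 1 →
        (((q (Fin.last n) + 1) * (q (Fin.last n) + 2) : ℕ) : ℝ) *
            a (fun j => q j + (if j = Fin.last n then 1 else 0), κ)
          + (∑ i ∈ Finset.univ.erase (Fin.last n),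
              (((q i + 1) * (q i + 2) : ℕ) : ℝ) *
                (if q (Fin.last n) = 0 then 0 else
                  a (fun j => q j + (if j = i then 2 else 0)
                      - (if j = Fin.last n then 1 else 0), κ)))
          - ((κ : ℝ) + 1) * (if q (Fin.last n) = 0 then 0 else
              a (fun j => q j - (if j = Fin.last n then 1 else 0), κ + 1))
          + (∑ᶠ ml, c ml (q, κ) * a ml)
          = d (q, κ)) := by
  refine ⟨aFun k c d a₀, ⟨fun p hp h0 => aFun_of_last_eq_zero k c d a₀ p hp h0,
    fun p hp => aFun_of_not_le k c d a₀ p hp, fun q κ hqκ => ?_⟩, ?_⟩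
  · -- existence: the equation holds for aFun
    rw [finsum_eq_box k c hc (aFun k c d a₀) q κ, aFun_succ k c d a₀ hk q κ hqκ]
    have hL : (((q (Fin.last n) + 1) * (q (Fin.last n) + 2) : ℕ) : ℝ) ≠ 0 := by positivity
    rw [mul_comm, div_mul_cancel₀ _ hL]
    ring
  · -- uniqueness
    rintro a ⟨h1, h2, h3⟩
    funext p
    suffices H : ∀ N (p : (Fin (n + 1) → ℕ) × ℕ), mu k p ≤ N → a p = aFun k c d a₀ p from
      H (mu k p) p le_rfl
    intro N
    induction N with
    | zero =>
      intro p hm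
      have hple : pOrder p ≤ k := by
        have h1' : pOrder p ≤ mu k p := le_trans
          (Nat.le_mul_of_pos_left _ (Nat.succ_pos k)) (Nat.le_add_right _ _)
        omega
      have hlast : p.1 (Fin.last n) = 0 := by
        have h2' : p.1 (Fin.last n) ≤ mu k p := Nat.le_add_left _ _
        omega
      rw [h1 p hple hlast, aFun_of_last_eq_zero k c d a₀ p hple hlast]
    | succ N ih =>
      intro p hm
      by_cases hp : pOrder p ≤ k
      · by_cases h0 : p.1 (Fin.last n) = 0
        · rw [h1 p hp h0, aFun_of_last_eq_zero k c d a₀ p hp h0]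
        · have hps : pOrder p = (∑ i, p.1 i) + 2 * p.2 := rfl
          have hlp : 1 ≤ p.1 (Fin.last n) := by omega
          have hsum : (∑ i, (p.1 i - if i = Fin.last n then 1 else 0)) + 1 = ∑ i, p.1 i :=
            sum_sub_ite p.1 (Fin.last n) 1 hlp
          have hlsum : p.1 (Fin.last n) ≤ ∑ i, p.1 i := single_le_sum' p.1 (Fin.last n)
          have hqκ : (∑ i, ((fun j => p.1 j - if j = Fin.last n then 1 else 0) i)) + 2 * p.2
              ≤ k - 1 := by
            simp only
            omega
          have hqp : (fun j => (fun j => p.1 j - if j = Fin.last n then 1 else 0) j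
              + (if j = Fin.last n then 1 else 0)) = p.1 := by
            funext j
            by_cases hj : j = Fin.last n
            · simp only [hj, if_pos]
              omega
            · simp [hj]
          have Ea := h3 (fun j => p.1 j - if j = Fin.last n then 1 else 0) p.2 hqκ
          have Ef := aFun_succ k c d a₀ hk
            (fun j => p.1 j - if j = Fin.last n then 1 else 0) p.2 hqκ
          rw [hqp, Prod.mk.eta] at Ea Ef
          rw [finsum_eq_box k c hc a _ p.2] at Ea
          simp only [eq_self_iff_true, if_true] at Ea Ef
          have hL : ((((p.1 (Fin.last n) - 1 + 1) * (p.1 (Fin.last n) - 1 + 2)) : ℕ) : ℝ) ≠ 0 := by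
            positivity
          have hAE : (∑ x ∈ Finset.univ.erase (Fin.last n),
              ((((p.1 x - if x = Fin.last n then 1 else 0) + 1) *
                ((p.1 x - if x = Fin.last n then 1 else 0) + 2) : ℕ) : ℝ) *
                (if p.1 (Fin.last n) - 1 = 0 then 0 else
                  a (fun j => ((p.1 j - if j = Fin.last n then 1 else 0) + if j = x then 2 else 0)
                      - if j = Fin.last n then 1 else 0, p.2)))
              = ∑ x ∈ Finset.univ.erase (Fin.last n),
              ((((p.1 x - if x = Fin.last n then 1 else 0) + 1) *
                ((p.1 x - if x = Fin.last n then 1 else 0) + 2) : ℕ) : ℝ) *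
                (if p.1 (Fin.last n) - 1 = 0 then 0 else
                  aFun k c d a₀ (fun j => ((p.1 j - if j = Fin.last n then 1 else 0)
                      + if j = x then 2 else 0) - if j = Fin.last n then 1 else 0, p.2)) := by
            refine Finset.sum_congr rfl fun x hx => ?_
            by_cases hz : p.1 (Fin.last n) - 1 = 0
            · simp [hz]
            · simp only [if_neg hz]
              congr 1
              refine ih _ ?_
              have := mu_lt₁ k p x (Finset.mem_erase.mp hx).1 hz
              omega
          have hBE : (if p.1 (Fin.last n) - 1 = 0 then (0 : ℝ) else
                a (fun j => (p.1 j - if j = Fin.last n then 1 else 0)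
                    - if j = Fin.last n then 1 else 0, p.2 + 1))
              = (if p.1 (Fin.last n) - 1 = 0 then (0 : ℝ) else
                aFun k c d a₀ (fun j => (p.1 j - if j = Fin.last n then 1 else 0)
                    - if j = Fin.last n then 1 else 0, p.2 + 1)) := by
            by_cases hz : p.1 (Fin.last n) - 1 = 0
            · simp [hz]
            · simp only [if_neg hz]
              refine ih _ ?_
              have := mu_lt₂ k p hz
              omega
          have hCE : (∑ ml ∈ box n ((∑ i, (p.1 i - if i = Fin.last n then 1 else 0)) + 2 * p.2),
                c ml (fun i => p.1 i - if i = Fin.last n then 1 else 0, p.2) * a ml)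
              = ∑ ml ∈ box n ((∑ i, (p.1 i - if i = Fin.last n then 1 else 0)) + 2 * p.2),
                c ml (fun i => p.1 i - if i = Fin.last n then 1 else 0, p.2)
                  * aFun k c d a₀ ml := by
            refine Finset.sum_congr rfl fun ml hml => ?_
            congr 1
            refine ih _ ?_
            have hb := mem_box.mp hml
            have := mu_lt₃ k p ml hp h0 (by omega)
            omega
          rw [Ef, eq_div_iff hL]
          linear_combination Ea - hAE + ((p.2 : ℝ) + 1) * hBE - hCE
      · rw [h2 p hp, aFun_of_not_le k c d a₀ p hp]
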